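/- Let L ⊆ ℝ^Ω be a convex cone containing the constants such that f ∈ L implies f⁺ is bounded, and let γ : L → ℝ be a concave integral with 0 < γ(1) < ∞. Then for each convex set C ⊆ L ∩ B with γ(C) := sup_{f ∈ C} γ(f) < ∞, there exists λ_C ∈ ba₊ with L ⊆ L(λ_C), γ(f) ≤ λ_C(f) for all f ∈ L, and sup_{f ∈ C} λ_C(f) = γ(C). -/

import Mathlib

/-! On bounded functions, `p b = inf {t · sup γ(C) - γ f : b ≤ t g - f, t ≥ 0, g ∈ C, f ∈ L}` is
sublinear (convexity of `C`, superadditivity of `γ`) and finite (`γ f' ≤ p b` whenever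
`f' ≤ b`). A Hahn–Banach functional `Λ ≤ p` therefore satisfies `γ f ≤ Λ b` whenever `f ≤ b`,
and `Λ ≤ sup γ(C)` on `C`. In particular `Λ` is positive, so `A ↦ Λ 1_A` is a finitely additive
measure whose integral is `Λ` on bounded functions (approximate by staircases from below).
Splitting `f = f⁺ - f⁻` then gives `γ f ≤ λ f` on `L`, while `λ g = Λ g ≤ sup γ(C)` on `C`. -/

open Filter Set

/-- A positive finitely additive set function on `2^Ω`. -/
structure FinAddMeasure (Ω : Type*) where
  μ : Set Ω → ℝ
  nonneg : ∀ E, 0 ≤ μ E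
  empty : μ ∅ = 0
  add : ∀ E F : Set Ω, Disjoint E F → μ (E ∪ F) = μ E + μ F

/-- A finitely additive probability on `2^Ω`. -/
structure FinAddProb (Ω : Type*) extends FinAddMeasure Ω where
  total : μ Set.univ = 1

/-- Lower (simple-function) sums for `f` relative to a set function `μ` defined
on the sets of the family `A`: sums `∑ aᵢ μ(Eᵢ)` with `aᵢ ≥ 0`, `Eᵢ ∈ A` and
`∑ aᵢ 1_{Eᵢ} ≤ f` pointwise. -/
def lowerSums {Ω : Type*} (A : Set (Set Ω)) (μ : Set Ω → ℝ) (f : Ω → ℝ) : Set ℝ :=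
  { r | ∃ (n : ℕ) (a : Fin n → ℝ) (E : Fin n → Set Ω),
      (∀ i, 0 ≤ a i) ∧ (∀ i, E i ∈ A) ∧
      (∀ ω, (∑ i, a i * (E i).indicator (fun _ => (1 : ℝ)) ω) ≤ f ω) ∧
      r = ∑ i, a i * μ (E i) }

/-- `f` is integrable with respect to `μ` (restricted to the family `A`):
the lower sums of the positive and of the negative part are bounded above. -/
def FAIntegrableOn {Ω : Type*} (A : Set (Set Ω)) (μ : Set Ω → ℝ) (f : Ω → ℝ) : Prop :=
  BddAbove (lowerSums A μ (fun ω => max (f ω) 0)) ∧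
  BddAbove (lowerSums A μ (fun ω => max (-(f ω)) 0))

/-- The finitely additive integral `μ(f) = μ(f⁺) - μ(f⁻)` obtained from lower sums. -/
noncomputable def faIntOn {Ω : Type*} (A : Set (Set Ω)) (μ : Set Ω → ℝ) (f : Ω → ℝ) : ℝ :=
  sSup (lowerSums A μ (fun ω => max (f ω) 0)) -
    sSup (lowerSums A μ (fun ω => max (-(f ω)) 0))

/-- Integrability with respect to a finitely additive measure on all of `2^Ω`. -/
def FAIntegrable {Ω : Type*} (m : FinAddMeasure Ω) (f : Ω → ℝ) : Prop :=
  FAIntegrableOn Set.univ m.μ f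

/-- The integral with respect to a finitely additive measure on all of `2^Ω`. -/
noncomputable def faInt {Ω : Type*} (m : FinAddMeasure Ω) (f : Ω → ℝ) : ℝ :=
  faIntOn Set.univ m.μ f

open scoped Pointwise

def boundedFunctions (Ω : Type*) : Submodule ℝ (Ω → ℝ) where
  carrier := {b | ∃ M : ℝ, ∀ ω, |b ω| ≤ M}
  add_mem' := by
    rintro a b ⟨Ma, hMa⟩ ⟨Mb, hMb⟩
    exact ⟨Ma + Mb, fun ω => (abs_add_le _ _).trans (add_le_add (hMa ω) (hMb ω))⟩
  zero_mem' := ⟨0, fun ω => by simp⟩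
  smul_mem' := by
    rintro c b ⟨M, hM⟩
    refine ⟨|c| * M, fun ω => ?_⟩
    rw [Pi.smul_apply, smul_eq_mul, abs_mul]
    exact mul_le_mul_of_nonneg_left (hM ω) (abs_nonneg c)

section BoundedFunctions

variable {Ω : Type*}

theorem const_mem_boundedFunctions (c : ℝ) : (fun _ => c) ∈ boundedFunctions Ω :=
  ⟨|c|, fun _ => le_rfl⟩

theorem indicator_one_mem_boundedFunctions (A : Set Ω) :
    A.indicator (fun _ => (1 : ℝ)) ∈ boundedFunctions Ω :=
  ⟨1, fun ω => by by_cases h : ω ∈ A <;> simp [h]⟩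

theorem posPart_mem_boundedFunctions {b : Ω → ℝ} (hb : b ∈ boundedFunctions Ω) :
    (fun ω => max (b ω) 0) ∈ boundedFunctions Ω := by
  obtain ⟨M, hM⟩ := hb
  refine ⟨M, fun ω => abs_le.2 ⟨?_, max_le ((le_abs_self _).trans (hM ω)) ?_⟩⟩
  · linarith [abs_nonneg (b ω), hM ω, le_max_right (b ω) 0]
  · exact (abs_nonneg _).trans (hM ω)

noncomputable def simpleFun {n : ℕ} (a : Fin n → ℝ) (E : Fin n → Set Ω) : Ω → ℝ :=
  fun ω => ∑ i, a i * (E i).indicator (fun _ => (1 : ℝ)) ω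

theorem simpleFun_eq_sum {n : ℕ} (a : Fin n → ℝ) (E : Fin n → Set Ω) :
    simpleFun a E = ∑ i, a i • (E i).indicator (fun _ => (1 : ℝ)) := by
  ext ω
  simp [simpleFun, Finset.sum_apply]

theorem simpleFun_mem_boundedFunctions {n : ℕ} (a : Fin n → ℝ) (E : Fin n → Set Ω) :
    simpleFun a E ∈ boundedFunctions Ω := by
  rw [simpleFun_eq_sum]
  exact Submodule.sum_mem _ fun i _ =>
    Submodule.smul_mem _ _ (indicator_one_mem_boundedFunctions (E i))

theorem map_simpleFun (Λ : (Ω → ℝ) →ₗ[ℝ] ℝ) {n : ℕ} (a : Fin n → ℝ) (E : Fin n → Set Ω) :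
    Λ (simpleFun a E) = ∑ i, a i * Λ ((E i).indicator fun _ => 1) := by
  simp [simpleFun_eq_sum, map_sum, map_smul]

/-- The staircase `ε ∑_{i < M/ε} 1_{b ≥ (i+1)ε}`. -/
theorem exists_simpleFun_le_le_add {b : Ω → ℝ} {M ε : ℝ} (hb : 0 ≤ b) (hbM : ∀ ω, b ω ≤ M)
    (hε : 0 < ε) : ∃ (n : ℕ) (E : Fin n → Set Ω),
      simpleFun (fun _ => ε) E ≤ b ∧ b ≤ simpleFun (fun _ => ε) E + fun _ => ε := by
  set k : Ω → ℕ := fun ω => ⌊b ω / ε⌋₊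
  have hkn : ∀ ω, k ω ≤ ⌊M / ε⌋₊ := fun ω =>
    Nat.floor_le_floor (div_le_div_of_nonneg_right (hbM ω) hε.le)
  have hsum : ∀ ω, simpleFun (fun _ => ε) (fun i : Fin ⌊M / ε⌋₊ => {ω | (i : ℕ) < k ω}) ω
      = k ω * ε := by
    intro ω
    simp only [simpleFun, ← Finset.mul_sum, Set.indicator_apply, Set.mem_ofPred_eq]
    rw [Finset.sum_boole, Fin.card_filter_val_lt, min_eq_right (hkn ω)]
    ring
  refine ⟨⌊M / ε⌋₊, fun i => {ω | (i : ℕ) < k ω}, fun ω => ?_, fun ω => ?_⟩ <;>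
    simp only [Pi.add_apply, hsum]
  · exact (le_div_iff₀ hε).1 (Nat.floor_le (div_nonneg (hb ω) hε.le))
  · have := Nat.lt_floor_add_one (b ω / ε)
    rw [div_lt_iff₀ hε] at this
    linarith

end BoundedFunctions

theorem zero_mem_lowerSums {Ω : Type*} {A : Set (Set Ω)} {μ : Set Ω → ℝ} {φ : Ω → ℝ}
    (hφ : 0 ≤ φ) : (0 : ℝ) ∈ lowerSums A μ φ :=
  ⟨0, Fin.elim0, Fin.elim0, fun i => i.elim0, fun i => i.elim0, fun ω => by simpa using hφ ω,
    by simp⟩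

theorem LinearMap.le_of_nonneg_on {E : Type*} [AddCommGroup E] [PartialOrder E]
    [IsOrderedAddMonoid E] [Module ℝ E] {V : Submodule ℝ E} {Λ : E →ₗ[ℝ] ℝ}
    (hΛ : ∀ x ∈ V, 0 ≤ x → 0 ≤ Λ x) {x y : E} (hx : x ∈ V) (hy : y ∈ V) (hxy : x ≤ y) :
    Λ x ≤ Λ y := by
  have := hΛ (y - x) (V.sub_mem hy hx) (sub_nonneg.2 hxy)
  rwa [map_sub, sub_nonneg] at this

namespace FinAddMeasure

variable {Ω : Type*} {Λ : (Ω → ℝ) →ₗ[ℝ] ℝ}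

noncomputable def ofFunctional (Λ : (Ω → ℝ) →ₗ[ℝ] ℝ)
    (hΛ : ∀ b ∈ boundedFunctions Ω, 0 ≤ b → 0 ≤ Λ b) :
    FinAddMeasure Ω where
  μ A := Λ (A.indicator fun _ => 1)
  nonneg A := hΛ _ (indicator_one_mem_boundedFunctions A)
    (Set.indicator_nonneg (fun _ _ => zero_le_one))
  empty := by
    rw [Set.indicator_empty]
    exact map_zero Λ
  add E F hEF := by
    rw [Set.indicator_union_of_disjoint hEF]
    exact map_add Λ (E.indicator _) (F.indicator _)

variable (hΛ : ∀ b ∈ boundedFunctions Ω, 0 ≤ b → 0 ≤ Λ b)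

theorem map_simpleFun_ofFunctional {n : ℕ} (a : Fin n → ℝ) (E : Fin n → Set Ω) :
    Λ (simpleFun a E) = ∑ i, a i * (ofFunctional Λ hΛ).μ (E i) :=
  map_simpleFun Λ a E

theorem le_of_mem_lowerSums_ofFunctional {φ b : Ω → ℝ} (hb : b ∈ boundedFunctions Ω)
    (hφb : φ ≤ b) {r : ℝ} (hr : r ∈ lowerSums univ (ofFunctional Λ hΛ).μ φ) : r ≤ Λ b := by
  obtain ⟨n, a, E, -, -, hle, rfl⟩ := hr
  rw [← map_simpleFun_ofFunctional]
  exact LinearMap.le_of_nonneg_on hΛ (simpleFun_mem_boundedFunctions a E) hb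
    fun ω => (hle ω).trans (hφb ω)

theorem sSup_lowerSums_ofFunctional {b : Ω → ℝ} (hb : b ∈ boundedFunctions Ω) (hb0 : 0 ≤ b) :
    sSup (lowerSums univ (ofFunctional Λ hΛ).μ b) = Λ b := by
  have hle : ∀ r ∈ lowerSums univ (ofFunctional Λ hΛ).μ b, r ≤ Λ b :=
    fun r => le_of_mem_lowerSums_ofFunctional hΛ hb le_rfl
  refine le_antisymm (csSup_le ⟨0, zero_mem_lowerSums hb0⟩ hle) ?_
  have hone : 0 ≤ Λ (fun _ => 1) := hΛ _ (const_mem_boundedFunctions 1) fun _ => zero_le_one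
  obtain ⟨M, hM⟩ := hb
  refine le_of_forall_pos_le_add fun δ hδ => ?_
  set ε := δ / (Λ (fun _ => 1) + 1)
  have hε : 0 < ε := by positivity
  have hεΛ : ε * Λ (fun _ => 1) ≤ δ := by
    rw [div_mul_eq_mul_div, div_le_iff₀ (by positivity)]
    nlinarith
  obtain ⟨n, E, hlow, hup⟩ :=
    exists_simpleFun_le_le_add hb0 (fun ω => (abs_le.1 (hM ω)).2) hε
  have hmem : ∑ i, ε * (ofFunctional Λ hΛ).μ (E i) ∈ lowerSums univ (ofFunctional Λ hΛ).μ b :=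
    ⟨n, fun _ => ε, E, fun _ => hε.le, fun _ => mem_univ _, hlow, rfl⟩
  have hconst : (fun _ : Ω => ε) = ε • fun _ => 1 := by ext; simp
  calc Λ b ≤ Λ (simpleFun (fun _ => ε) E + fun _ => ε) :=
        LinearMap.le_of_nonneg_on hΛ ⟨M, hM⟩
          (Submodule.add_mem _ (simpleFun_mem_boundedFunctions _ E)
            (const_mem_boundedFunctions ε)) hup
    _ = ∑ i, ε * (ofFunctional Λ hΛ).μ (E i) + ε * Λ (fun _ => 1) := by
        rw [map_add, map_simpleFun_ofFunctional hΛ, hconst, map_smul, smul_eq_mul]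
    _ ≤ sSup (lowerSums univ (ofFunctional Λ hΛ).μ b) + δ :=
        add_le_add (le_csSup ⟨Λ b, hle⟩ hmem) hεΛ

theorem faInt_ofFunctional {b : Ω → ℝ} (hb : b ∈ boundedFunctions Ω) :
    faInt (ofFunctional Λ hΛ) b = Λ b := by
  have hneg : (fun ω => max (-(b ω)) 0) ∈ boundedFunctions Ω :=
    posPart_mem_boundedFunctions (Submodule.neg_mem _ hb)
  rw [faInt, faIntOn, sSup_lowerSums_ofFunctional hΛ (posPart_mem_boundedFunctions hb)
      fun ω => le_max_right (b ω) 0, sSup_lowerSums_ofFunctional hΛ hneg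
      fun ω => le_max_right (-(b ω)) 0,
    ← map_sub]
  congr 1
  ext ω
  exact max_zero_sub_max_neg_zero_eq_self (b ω)

theorem le_faInt_ofFunctional {f : Ω → ℝ} {c : ℝ}
    (hf : (fun ω => max (f ω) 0) ∈ boundedFunctions Ω)
    (hc : ∀ b ∈ boundedFunctions Ω, f ≤ b → c ≤ Λ b) :
    FAIntegrable (ofFunctional Λ hΛ) f ∧ c ≤ faInt (ofFunctional Λ hΛ) f := by
  set fp := fun ω => max (f ω) 0
  have hneg : ∀ r ∈ lowerSums univ (ofFunctional Λ hΛ).μ (fun ω => max (-(f ω)) 0),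
      r ≤ Λ fp - c := by
    rintro r ⟨n, a, E, -, -, hle, rfl⟩
    have := hc _ (Submodule.sub_mem _ hf (simpleFun_mem_boundedFunctions a E)) fun ω => by
      have := max_zero_sub_max_neg_zero_eq_self (f ω)
      simp only [Pi.sub_apply, fp, simpleFun]
      linarith [hle ω]
    rw [map_sub, map_simpleFun_ofFunctional hΛ] at this
    linarith
  refine ⟨⟨⟨Λ fp, fun r => le_of_mem_lowerSums_ofFunctional hΛ hf le_rfl⟩, ⟨_, hneg⟩⟩, ?_⟩
  have := csSup_le ⟨0, zero_mem_lowerSums fun ω => le_max_right (-(f ω)) 0⟩ hneg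
  rw [faInt, faIntOn, sSup_lowerSums_ofFunctional hΛ hf fun ω => le_max_right (f ω) 0]
  linarith

end FinAddMeasure

theorem exists_linearMap_le_of_sublinearOn {E : Type*} [AddCommGroup E] [Module ℝ E]
    (V : Submodule ℝ E) (N : E → ℝ) (hN_add : ∀ x ∈ V, ∀ y ∈ V, N (x + y) ≤ N x + N y)
    (hN_smul : ∀ c : ℝ, 0 < c → ∀ x ∈ V, N (c • x) = c * N x) :
    ∃ Λ : E →ₗ[ℝ] ℝ, ∀ x ∈ V, Λ x ≤ N x := by
  have hN0 : N 0 = 0 := by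
    have := hN_smul 2 two_pos 0 V.zero_mem
    rw [smul_zero] at this
    linarith
  obtain ⟨Λ, -, hΛ⟩ := exists_extension_of_le_sublinear (⟨⊥, 0⟩ : V →ₗ.[ℝ] ℝ) (N ∘ V.subtype)
    (fun c hc x => hN_smul c hc x x.2) (fun x y => hN_add x x.2 y y.2) fun ⟨x, hx⟩ => by
      rw [Submodule.mem_bot] at hx
      simp [hx, hN0]
  obtain ⟨Λ', hΛ'⟩ := LinearMap.exists_extend Λ
  exact ⟨Λ', fun x hx => by simpa [← hΛ'] using hΛ ⟨x, hx⟩⟩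

structure IsConcaveIntegral {Ω : Type*} (L : Set (Ω → ℝ)) (γ : (Ω → ℝ) → ℝ) : Prop where
  add_mem : ∀ f g : Ω → ℝ, f ∈ L → g ∈ L → f + g ∈ L
  smul_mem : ∀ c : ℝ, 0 ≤ c → ∀ f ∈ L, c • f ∈ L
  const_mem : ∀ c : ℝ, (fun _ => c) ∈ L
  mono : ∀ f g, f ∈ L → g ∈ L → f ≤ g → γ f ≤ γ g
  superadditive : ∀ f g, f ∈ L → g ∈ L → γ f + γ g ≤ γ (f + g)
  smul : ∀ c : ℝ, 0 < c → ∀ f ∈ L, γ (c • f) = c * γ f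
  const_add : ∀ (c : ℝ) (f : Ω → ℝ), f ∈ L → γ (fun ω => c + f ω) = γ (fun _ => c) + γ f

namespace IsConcaveIntegral

variable {Ω : Type*} {L : Set (Ω → ℝ)} {γ : (Ω → ℝ) → ℝ}

theorem map_zero (hγ : IsConcaveIntegral L γ) : γ 0 = 0 := by
  show γ (fun _ => 0) = 0
  have := hγ.const_add 0 (fun _ => 0) (hγ.const_mem 0)
  simp only [add_zero] at this
  linarith

theorem smul_le {g : Ω → ℝ} {t s : ℝ} (hγ : IsConcaveIntegral L γ) (hg : g ∈ L) (ht : 0 ≤ t)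
    (hgs : γ g ≤ s) : γ (t • g) ≤ t * s := by
  rcases ht.eq_or_lt with rfl | ht
  · simp [hγ.map_zero]
  · rw [hγ.smul t ht g hg]
    exact mul_le_mul_of_nonneg_left hgs ht.le

end IsConcaveIntegral

/-- `sInf (upperValues L C γ s b)` is the majorant `p b` of the Hahn–Banach step. -/
def upperValues {Ω : Type*} (L C : Set (Ω → ℝ)) (γ : (Ω → ℝ) → ℝ) (s : ℝ) (b : Ω → ℝ) :
    Set ℝ :=
  {r | ∃ t : ℝ, 0 ≤ t ∧ ∃ g ∈ C, ∃ f ∈ L, b ≤ t • g - f ∧ t * s - γ f ≤ r}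

section UpperValues

variable {Ω : Type*} {L C : Set (Ω → ℝ)} {γ : (Ω → ℝ) → ℝ} {s : ℝ}

theorem le_of_mem_upperValues (hγ : IsConcaveIntegral L γ) (hCL : C ⊆ L)
    (hs : ∀ g ∈ C, γ g ≤ s) {f' b : Ω → ℝ} (hf' : f' ∈ L) (hf'b : f' ≤ b) {r : ℝ}
    (hr : r ∈ upperValues L C γ s b) : γ f' ≤ r := by
  obtain ⟨t, ht, g, hg, f, hf, hb, hr⟩ := hr
  have htg : t • g ∈ L := hγ.smul_mem t ht g (hCL hg)
  have hsum : γ f' + γ f ≤ γ (t • g) :=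
    (hγ.superadditive f' f hf' hf).trans <|
      hγ.mono _ _ (hγ.add_mem f' f hf' hf) htg (le_sub_iff_add_le.1 (hf'b.trans hb))
  linarith [hγ.smul_le (hCL hg) ht (hs g hg)]

theorem upperValues_nonempty (hγ : IsConcaveIntegral L γ) (hC : C.Nonempty) {b : Ω → ℝ}
    (hb : b ∈ boundedFunctions Ω) : (upperValues L C γ s b).Nonempty := by
  obtain ⟨M, hM⟩ := hb
  obtain ⟨g, hg⟩ := hC
  refine ⟨_, 0, le_rfl, g, hg, fun _ => -M, hγ.const_mem (-M), fun ω => ?_, le_rfl⟩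
  simpa using (abs_le.1 (hM ω)).2

theorem upperValues_bddBelow (hγ : IsConcaveIntegral L γ) (hCL : C ⊆ L)
    (hs : ∀ g ∈ C, γ g ≤ s) {b : Ω → ℝ} (hb : b ∈ boundedFunctions Ω) :
    BddBelow (upperValues L C γ s b) := by
  obtain ⟨M, hM⟩ := hb
  exact ⟨γ fun _ => -M, fun r => le_of_mem_upperValues hγ hCL hs (hγ.const_mem (-M))
    fun ω => neg_le_of_abs_le (hM ω)⟩

theorem add_mem_upperValues (hγ : IsConcaveIntegral L γ) (hC : Convex ℝ C)
    {b₁ b₂ : Ω → ℝ} {r₁ r₂ : ℝ} (h₁ : r₁ ∈ upperValues L C γ s b₁)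
    (h₂ : r₂ ∈ upperValues L C γ s b₂) : r₁ + r₂ ∈ upperValues L C γ s (b₁ + b₂) := by
  obtain ⟨t₁, ht₁, g₁, hg₁, f₁, hf₁, hb₁, hr₁⟩ := h₁
  obtain ⟨t₂, ht₂, g₂, hg₂, f₂, hf₂, hb₂, hr₂⟩ := h₂
  obtain ⟨g, hg, hcomb⟩ := hC.exists_mem_add_smul_eq hg₁ hg₂ ht₁ ht₂
  refine ⟨t₁ + t₂, add_nonneg ht₁ ht₂, g, hg, f₁ + f₂, hγ.add_mem f₁ f₂ hf₁ hf₂, ?_, ?_⟩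
  · calc b₁ + b₂ ≤ (t₁ • g₁ - f₁) + (t₂ • g₂ - f₂) := add_le_add hb₁ hb₂
      _ = (t₁ + t₂) • g - (f₁ + f₂) := by rw [hcomb]; abel
  · linarith [hγ.superadditive f₁ f₂ hf₁ hf₂]

theorem smul_mem_upperValues (hγ : IsConcaveIntegral L γ) {a : ℝ} (ha : 0 < a)
    {b : Ω → ℝ} {r : ℝ} (hr : r ∈ upperValues L C γ s b) :
    a * r ∈ upperValues L C γ s (a • b) := by
  obtain ⟨t, ht, g, hg, f, hf, hb, hr⟩ := hr
  refine ⟨a * t, mul_nonneg ha.le ht, g, hg, a • f, hγ.smul_mem a ha.le f hf, ?_, ?_⟩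
  · calc a • b ≤ a • (t • g - f) := smul_le_smul_of_nonneg_left hb ha.le
      _ = (a * t) • g - a • f := by rw [smul_sub, mul_smul]
  · calc a * t * s - γ (a • f) = a * (t * s - γ f) := by rw [hγ.smul a ha f hf]; ring
      _ ≤ a * r := mul_le_mul_of_nonneg_left hr ha.le

theorem upperValues_smul (hγ : IsConcaveIntegral L γ) {a : ℝ} (ha : 0 < a) (b : Ω → ℝ) :
    upperValues L C γ s (a • b) = a • upperValues L C γ s b := by
  ext r
  constructor
  · intro hr
    refine ⟨a⁻¹ * r, ?_, by simp [ha.ne']⟩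
    simpa [smul_smul, ha.ne'] using smul_mem_upperValues hγ (inv_pos.2 ha) hr
  · rintro ⟨r, hr, rfl⟩
    exact smul_mem_upperValues hγ ha hr

end UpperValues

theorem exists_linearMap_ge_of_isConcaveIntegral {Ω : Type*} {L C : Set (Ω → ℝ)}
    {γ : (Ω → ℝ) → ℝ} {s : ℝ} (hγ : IsConcaveIntegral L γ) (hCL : C ⊆ L) (hC : Convex ℝ C)
    (hCne : C.Nonempty) (hs : ∀ g ∈ C, γ g ≤ s) :
    ∃ Λ : (Ω → ℝ) →ₗ[ℝ] ℝ, (∀ f ∈ L, ∀ b ∈ boundedFunctions Ω, f ≤ b → γ f ≤ Λ b) ∧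
      ∀ g ∈ C, g ∈ boundedFunctions Ω → Λ g ≤ s := by
  obtain ⟨Λ, hΛ⟩ := exists_linearMap_le_of_sublinearOn (boundedFunctions Ω)
    (fun b => sInf (upperValues L C γ s b))
    (fun x hx y hy => calc
      sInf (upperValues L C γ s (x + y))
          ≤ sInf (upperValues L C γ s x + upperValues L C γ s y) :=
        csInf_le_csInf (upperValues_bddBelow hγ hCL hs (Submodule.add_mem _ hx hy))
          ((upperValues_nonempty hγ hCne hx).add (upperValues_nonempty hγ hCne hy))
          (Set.add_subset_iff.2 fun _ h₁ _ h₂ => add_mem_upperValues hγ hC h₁ h₂)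
      _ = _ := csInf_add (upperValues_nonempty hγ hCne hx) (upperValues_bddBelow hγ hCL hs hx)
          (upperValues_nonempty hγ hCne hy) (upperValues_bddBelow hγ hCL hs hy))
    (fun c hc x _ => by
      rw [upperValues_smul hγ hc, Real.sInf_smul_of_nonneg hc.le, smul_eq_mul])
  have hle : ∀ b ∈ boundedFunctions Ω, ∀ r ∈ upperValues L C γ s b, Λ b ≤ r := fun b hb r hr =>
    (hΛ b hb).trans (csInf_le (upperValues_bddBelow hγ hCL hs hb) hr)
  obtain ⟨g₀, hg₀⟩ := hCne
  refine ⟨Λ, fun f hf b hb hfb => ?_, fun g hg hgb => hle g hgb s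
    ⟨1, zero_le_one, g, hg, 0, hγ.const_mem 0, by simp, by simp [hγ.map_zero]⟩⟩
  have := hle (-b) (Submodule.neg_mem _ hb) (-γ f)
    ⟨0, le_rfl, g₀, hg₀, f, hf, by simpa using hfb, by simp⟩
  rw [map_neg] at this
  linarith

theorem exists_finAddMeasure_core_le {Ω : Type*} {L C : Set (Ω → ℝ)} {γ : (Ω → ℝ) → ℝ}
    {s : ℝ} (hγ : IsConcaveIntegral L γ) (hL : ∀ f ∈ L, ∃ M : ℝ, ∀ ω, max (f ω) 0 ≤ M)
    (hCL : C ⊆ L) (hCb : ∀ g ∈ C, g ∈ boundedFunctions Ω) (hC : Convex ℝ C)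
    (hCne : C.Nonempty) (hs : ∀ g ∈ C, γ g ≤ s) :
    ∃ m : FinAddMeasure Ω, (∀ f ∈ L, FAIntegrable m f ∧ γ f ≤ faInt m f) ∧
      ∀ g ∈ C, faInt m g ≤ s := by
  obtain ⟨Λ, hdom, hΛC⟩ := exists_linearMap_ge_of_isConcaveIntegral hγ hCL hC hCne hs
  have hΛ : ∀ b ∈ boundedFunctions Ω, 0 ≤ b → 0 ≤ Λ b := fun b hb hb0 =>
    hγ.map_zero ▸ hdom 0 (hγ.const_mem 0) b hb hb0
  refine ⟨.ofFunctional Λ hΛ, fun f hf => ?_, fun g hg => ?_⟩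
  · obtain ⟨M, hM⟩ := hL f hf
    exact FinAddMeasure.le_faInt_ofFunctional hΛ
      ⟨M, fun ω => (abs_of_nonneg (le_max_right _ _)).trans_le (hM ω)⟩ (hdom f hf)
  · rw [FinAddMeasure.faInt_ofFunctional hΛ (hCb g hg)]
    exact hΛC g hg (hCb g hg)

theorem csSup_image_eq_of_le {α : Type*} {f g : α → ℝ} {C : Set α} (hC : C.Nonempty)
    (hfg : ∀ x ∈ C, f x ≤ g x) (hg : ∀ x ∈ C, g x ≤ sSup (f '' C)) :
    sSup (g '' C) = sSup (f '' C) := by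
  have hg' : ∀ y ∈ g '' C, y ≤ sSup (f '' C) := forall_mem_image.2 hg
  refine le_antisymm (csSup_le (hC.image g) hg') (csSup_le (hC.image f) ?_)
  rintro _ ⟨x, hx, rfl⟩
  exact (hfg x hx).trans (le_csSup ⟨_, hg'⟩ (mem_image_of_mem g hx))

theorem concave_integral_core_general {Ω : Type*}
    (L : Set (Ω → ℝ))
    (hadd : ∀ f g : Ω → ℝ, f ∈ L → g ∈ L → f + g ∈ L)
    (hsmul : ∀ (c : ℝ), 0 ≤ c → ∀ f ∈ L, c • f ∈ L)
    (hconst : ∀ c : ℝ, (fun _ => c) ∈ L)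
    (hbdd : ∀ f ∈ L, ∃ M : ℝ, ∀ ω, max (f ω) 0 ≤ M)
    (γ : (Ω → ℝ) → ℝ)
    (hmono : ∀ f g, f ∈ L → g ∈ L → (∀ ω, f ω ≤ g ω) → γ f ≤ γ g)
    (hsuper : ∀ f g, f ∈ L → g ∈ L → γ f + γ g ≤ γ (f + g))
    (hhomog : ∀ (c : ℝ), 0 < c → ∀ f ∈ L, γ (c • f) = c * γ f)
    (hconstadd : ∀ (c : ℝ) (f : Ω → ℝ), f ∈ L →
        γ (fun ω => c + f ω) = γ (fun _ => c) + γ f) :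
    ∀ C : Set (Ω → ℝ), C ⊆ L → (∀ f ∈ C, ∃ M : ℝ, ∀ ω, |f ω| ≤ M) →
      (∀ f ∈ C, ∀ g ∈ C, ∀ t : ℝ, 0 ≤ t → t ≤ 1 → t • f + (1 - t) • g ∈ C) →
      BddAbove (γ '' C) →
      ∃ lamC : FinAddMeasure Ω,
        (∀ f ∈ L, FAIntegrable lamC f ∧ γ f ≤ faInt lamC f) ∧
        sSup (faInt lamC '' C) = sSup (γ '' C) := by
  intro C hCL hCb hCconv hCbdd
  have hγ : IsConcaveIntegral L γ :=
    ⟨hadd, hsmul, hconst, hmono, hsuper, hhomog, hconstadd⟩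
  rcases C.eq_empty_or_nonempty with rfl | hCne
  · obtain ⟨m, hm, -⟩ := exists_finAddMeasure_core_le (C := {0}) (s := 0) hγ hbdd
      (singleton_subset_iff.2 (hconst 0)) (by simp [(boundedFunctions Ω).zero_mem])
      (convex_singleton 0) (singleton_nonempty 0) (by simp [hγ.map_zero])
    exact ⟨m, hm, by simp⟩
  have hC : Convex ℝ C := fun f hf g hg a b ha hb hab => by
    obtain rfl : b = 1 - a := by linarith
    exact hCconv f hf g hg a ha (by linarith)
  obtain ⟨m, hm, hmC⟩ := exists_finAddMeasure_core_le hγ hbdd hCL hCb hC hCne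
    fun g hg => le_csSup hCbdd (mem_image_of_mem γ hg)
  exact ⟨m, hm, csSup_image_eq_of_le hCne (fun f hf => (hm f (hCL hf)).2) hmC⟩

/-- Shapley-type lemma: a real-valued concave integral `γ` on a
convex cone `L` (containing the constants, with `f⁺` bounded for `f ∈ L`) with
`0 < γ(1)` attains, on every convex set `C` of bounded members of `L` with
`γ(C) = sup_{f ∈ C} γ(f) < ∞`, its sup through some core element `λ_C`. -/
theorem concave_integral_core {Ω : Type*} [Nonempty Ω]
    (L : Set (Ω → ℝ))
    (hadd : ∀ f g : Ω → ℝ, f ∈ L → g ∈ L → f + g ∈ L)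
    (hsmul : ∀ (c : ℝ), 0 ≤ c → ∀ f ∈ L, c • f ∈ L)
    (hconst : ∀ c : ℝ, (fun _ => c) ∈ L)
    (hbdd : ∀ f ∈ L, ∃ M : ℝ, ∀ ω, max (f ω) 0 ≤ M)
    (γ : (Ω → ℝ) → ℝ)
    (hmono : ∀ f g, f ∈ L → g ∈ L → (∀ ω, f ω ≤ g ω) → γ f ≤ γ g)
    (hsuper : ∀ f g, f ∈ L → g ∈ L → γ f + γ g ≤ γ (f + g))
    (hhomog : ∀ (c : ℝ), 0 < c → ∀ f ∈ L, γ (c • f) = c * γ f)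
    (hconstadd : ∀ (c : ℝ) (f : Ω → ℝ), f ∈ L →
        γ (fun ω => c + f ω) = γ (fun _ => c) + γ f)
    (hγ1 : 0 < γ (fun _ => (1 : ℝ))) :
    ∀ C : Set (Ω → ℝ), C ⊆ L → (∀ f ∈ C, ∃ M : ℝ, ∀ ω, |f ω| ≤ M) →
      (∀ f ∈ C, ∀ g ∈ C, ∀ t : ℝ, 0 ≤ t → t ≤ 1 → t • f + (1 - t) • g ∈ C) →
      BddAbove (γ '' C) →
      ∃ lamC : FinAddMeasure Ω,
        (∀ f ∈ L, FAIntegrable lamC f ∧ γ f ≤ faInt lamC f) ∧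
        sSup (faInt lamC '' C) = sSup (γ '' C) :=
  concave_integral_core_general L hadd hsmul hconst hbdd γ hmono hsuper hhomog hconstadd
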